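/- (Comparison principle, two free boundaries.) Let T > 0, let J₁ satisfy (J), d₁, μ > 0, let m be bounded and continuous on [0,T]×ℝ and set F(t,x,s) := s(m(t,x) − s). Let ḡ, h̄, g̲, h̲ ∈ C¹([0,T]) with g̲ < h̲, ḡ < h̄, ḡ′ ≤ 0 ≤ h̄′ and g̲′ ≤ 0 ≤ h̲′. Let ū, u̲ : [0,T]×ℝ → ℝ be nonnegative, bounded and continuous, differentiable in t for x in the respective moving regions. Suppose: (i) ū_t(t,x) ≥ d₁∫_{ḡ(t)}^{h̄(t)} J₁(x−y)ū(t,y)dy − d₁ū(t,x) + F(t,x,ū(t,x)) for t ∈ (0,T], ḡ(t) < x < h̄(t); ū(t,x) ≥ 0 for x ∉ (ḡ(t),h̄(t)); h̄′(t) ≥ μ∫_{ḡ(t)}^{h̄(t)}∫_{h̄(t)}^{∞} J₁(x−y)ū(t,x)dy dx and ḡ′(t) ≤ −μ∫_{ḡ(t)}^{h̄(t)}∫_{−∞}^{ḡ(t)} J₁(x−y)ū(t,x)dy dx for t ∈ (0,T]; (ii) u̲ satisfies the same relations with all inequality signs reversed (in particular u̲(t,x) = 0 for x ∉ (g̲(t),h̲(t)));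 (iii) [g̲(0),h̲(0)] ⊆ [ḡ(0),h̄(0)] and ū(0,x) ≥ u̲(0,x) for x ∈ [g̲(0),h̲(0)]. Then [g̲(t),h̲(t)] ⊆ [ḡ(t),h̄(t)] for all t ∈ [0,T], and u̲(t,x) ≤ ū(t,x) for all t ∈ [0,T] and x ∈ [g̲(t),h̲(t)]. -/

import Mathlib

/-!
Compare the two solutions through the defect `q(t, x) = (u̲ - ū 1_(ḡ(t), h̄(t)))⁺`, its mass
`G(t) = ∫ q(t, x) dx` and the boundary gaps `(ḡ - g̲)⁺`, `(h̲ - h̄)⁺`. A point `x` enters the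
growing upper domain at most once, and `q(·, x)` can only jump down there. Before, `∂ₜ u̲` is
bounded, and this happens only on the part of the lower domain outside the upper one, whose length
is at most the sum of the gaps. Afterwards, subtracting the two equations gives
`∂ₜ (u̲ - ū) ≤ d₁ (sup J) G + K q` wherever `q > 0`, with `K` a bound for `m`. The free boundary
conditions give `(h̲ - h̄)' ≤ μ G` while `h̄ < h̲`, and similarly on the left. Integrating in space
and time, `G` plus the gaps is bounded by a multiple of its own time integral, hence vanishes by
Grönwall's lemma.
-/

open MeasureTheory Filter Topology

/-- Assumption (J) on a kernel function. -/
def IsKernel (J : ℝ → ℝ) : Prop :=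
  Continuous J ∧ (∃ C, ∀ x, J x ≤ C) ∧ (∀ x, J (-x) = J x) ∧
    (∀ x, 0 ≤ J x) ∧ 0 < J 0 ∧ (∫ x, J x) = 1

open Set Function

/-! ### Positive parts, Grönwall's lemma and Fubini -/

theorem posPart_le_posPart_add_integral {f U : ℝ → ℝ} {a b : ℝ} (hab : a ≤ b)
    (hf : ContinuousOn f (Icc a b)) (hU : IntegrableOn U (Icc a b))
    (hU0 : ∀ s ∈ Icc a b, 0 ≤ U s)
    (hderiv : ∀ s ∈ Ioo a b, 0 < f s → ∃ D, HasDerivAt f D s ∧ D ≤ U s) :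
    (f b)⁺ ≤ (f a)⁺ + ∫ s in a..b, U s := by
  choose! D hD using hderiv
  -- after the last time `c` at which `f ≤ (f a)⁺`, the function `f` is positive
  set S := Icc a b ∩ f ⁻¹' Iic (f a)⁺
  have hSb : BddAbove S := bddAbove_Icc.mono inter_subset_left
  obtain ⟨⟨hac, hcb⟩, hfc : f (sSup S) ≤ (f a)⁺⟩ : sSup S ∈ S :=
    (hf.preimage_isClosed_of_isClosed isClosed_Icc isClosed_Iic).csSup_mem
      ⟨a, left_mem_Icc.2 hab, le_posPart (f a)⟩ hSb
  set c := sSup S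
  have hpos : ∀ s ∈ Ioo c b, 0 < f s := fun s hs =>
    (posPart_nonneg _).trans_lt <| not_le.1 fun h =>
      hs.1.not_ge (le_csSup hSb ⟨⟨hac.trans hs.1.le, hs.2.le⟩, h⟩)
  have hDc : ∀ s ∈ Ioo c b, HasDerivAt f (D s) s ∧ D s ≤ U s :=
    fun s hs => hD s ⟨hac.trans_lt hs.1, hs.2⟩ (hpos s hs)
  have hfb : f b - f c ≤ ∫ s in c..b, U s :=
    intervalIntegral.sub_le_integral_of_hasDeriv_right_of_le hcb
      (hf.mono (Icc_subset_Icc hac le_rfl)) (fun s hs => (hDc s hs).1.hasDerivWithinAt)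
      (hU.mono_set (Icc_subset_Icc hac le_rfl)) (fun s hs => (hDc s hs).2)
  have hUc : ∫ s in c..b, U s ≤ ∫ s in a..b, U s :=
    intervalIntegral.integral_mono_interval hac hcb le_rfl
      ((ae_restrict_iff' measurableSet_Ioc).2
        (.of_forall fun s hs => hU0 s (Ioc_subset_Icc_self hs)))
      ((intervalIntegrable_iff_integrableOn_Icc_of_le hab).2 hU)
  have hab0 : 0 ≤ ∫ s in a..b, U s := intervalIntegral.integral_nonneg hab hU0
  exact max_le (by linarith) (by linarith [posPart_nonneg (f a)])

theorem posPart_piecewise_le_posPart_add_integral {f₁ f₂ U : ℝ → ℝ} {S : Set ℝ}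
    [DecidablePred (· ∈ S)] {a b : ℝ} (hab : a ≤ b) (hS : IsUpperSet S)
    (hf₁ : ContinuousOn f₁ (Icc a b)) (hf₂ : ContinuousOn f₂ (Icc a b))
    (hf₂₁ : ∀ s ∈ Icc a b, f₂ s ≤ f₁ s) (hU : IntegrableOn U (Icc a b))
    (hU0 : ∀ s ∈ Icc a b, 0 ≤ U s)
    (hderiv₁ : ∀ s ∈ Ioo a b, s ∉ S → 0 < f₁ s → ∃ D, HasDerivAt f₁ D s ∧ D ≤ U s)
    (hderiv₂ : ∀ s ∈ Ioo a b, s ∈ S → 0 < f₂ s → ∃ D, HasDerivAt f₂ D s ∧ D ≤ U s) :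
    (S.piecewise f₂ f₁ b)⁺ ≤ (S.piecewise f₂ f₁ a)⁺ + ∫ s in a..b, U s := by
  by_cases hbS : b ∉ S
  · have hS' : ∀ s ∈ Icc a b, s ∉ S := fun s hs h => hbS (hS hs.2 h)
    rw [piecewise_eq_of_notMem _ _ _ hbS, piecewise_eq_of_notMem _ _ _ (hS' a ⟨le_rfl, hab⟩)]
    exact posPart_le_posPart_add_integral hab hf₁ hU hU0 fun s hs =>
      hderiv₁ s hs (hS' s (Ioo_subset_Icc_self hs))
  rw [not_not] at hbS
  by_cases haS : a ∈ S
  · rw [piecewise_eq_of_mem _ _ _ hbS, piecewise_eq_of_mem _ _ _ haS]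
    exact posPart_le_posPart_add_integral hab hf₂ hU hU0 fun s hs =>
      hderiv₂ s hs (hS hs.1.le haS)
  have hne : (S ∩ Icc a b).Nonempty := ⟨b, hbS, hab, le_rfl⟩
  have hbdd : BddBelow (S ∩ Icc a b) := ⟨a, fun s hs => hs.2.1⟩
  set c := sInf (S ∩ Icc a b)
  have hac : a ≤ c := le_csInf hne fun s hs => hs.2.1
  have hcb : c ≤ b := csInf_le hbdd ⟨hbS, hab, le_rfl⟩
  have h₁ : (f₁ c)⁺ ≤ (f₁ a)⁺ + ∫ s in a..c, U s :=
    posPart_le_posPart_add_integral hac (hf₁.mono (Icc_subset_Icc le_rfl hcb))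
      (hU.mono_set (Icc_subset_Icc le_rfl hcb)) (fun s hs => hU0 s ⟨hs.1, hs.2.trans hcb⟩)
      fun s hs => hderiv₁ s ⟨hs.1, hs.2.trans_le hcb⟩ fun h =>
        hs.2.not_ge (csInf_le hbdd ⟨h, hs.1.le, hs.2.le.trans hcb⟩)
  have h₂ : (f₂ b)⁺ ≤ (f₂ c)⁺ + ∫ s in c..b, U s :=
    posPart_le_posPart_add_integral hcb (hf₂.mono (Icc_subset_Icc hac le_rfl))
      (hU.mono_set (Icc_subset_Icc hac le_rfl)) (fun s hs => hU0 s ⟨hac.trans hs.1, hs.2⟩)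
      fun s hs => hderiv₂ s ⟨hac.trans_lt hs.1, hs.2⟩ <| by
        obtain ⟨e, he, hes⟩ := exists_lt_of_csInf_lt hne hs.1
        exact hS hes.le he.1
  have hI : ∀ x y, x ∈ Icc a b → y ∈ Icc a b → IntervalIntegrable U volume x y :=
    fun x y hx hy => (hU.mono_set (uIcc_subset_Icc hx hy)).intervalIntegrable
  rw [piecewise_eq_of_mem _ _ _ hbS, piecewise_eq_of_notMem _ _ _ haS,
    ← intervalIntegral.integral_add_adjacent_intervals (hI a c ⟨le_rfl, hab⟩ ⟨hac, hcb⟩)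
      (hI c b ⟨hac, hcb⟩ ⟨hab, le_rfl⟩)]
  linarith [posPart_mono (hf₂₁ c ⟨hac, hcb⟩)]

theorem eq_zero_of_le_mul_integral {y : ℝ → ℝ} {K T : ℝ} (hy : IntegrableOn y (Icc 0 T))
    (hy0 : ∀ t ∈ Icc 0 T, 0 ≤ y t) (hle : ∀ t ∈ Icc 0 T, y t ≤ K * ∫ s in 0..t, y s) :
    ∀ t ∈ Icc 0 T, y t = 0 := by
  -- the continuous primitive `Y` satisfies the same inequality, and Grönwall applies to `∫ Y`
  set Y : ℝ → ℝ := fun t => ∫ s in 0..t, (Icc 0 T).indicator y s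
  have hYc : Continuous Y := intervalIntegral.continuous_primitive
    (fun _ _ => (hy.integrable_indicator measurableSet_Icc).intervalIntegrable) 0
  have hY : ∀ t ∈ Icc 0 T, Y t = ∫ s in 0..t, y s := fun t ht =>
    intervalIntegral.integral_congr fun s hs => by
      rw [uIcc_of_le ht.1] at hs
      exact indicator_of_mem (show s ∈ Icc 0 T from ⟨hs.1, hs.2.trans ht.2⟩) y
  have hY0 : ∀ t ∈ Icc 0 T, 0 ≤ Y t := fun t ht => by
    rw [hY t ht]
    exact intervalIntegral.integral_nonneg ht.1 fun s hs => hy0 s ⟨hs.1, hs.2.trans ht.2⟩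
  have hYZ : ∀ t ∈ Icc 0 T, Y t ≤ K * ∫ s in 0..t, Y s := fun t ht => by
    rw [hY t ht, ← intervalIntegral.integral_const_mul]
    refine intervalIntegral.integral_mono_on ht.1
      ((intervalIntegrable_iff_integrableOn_Icc_of_le ht.1).2
        (hy.mono_set (Icc_subset_Icc le_rfl ht.2)))
      ((hYc.const_mul K).intervalIntegrable _ _) fun s hs => ?_
    rw [hY s ⟨hs.1, hs.2.trans ht.2⟩]
    exact hle s ⟨hs.1, hs.2.trans ht.2⟩
  have hZ : ∀ t ∈ Icc 0 T, ∫ s in 0..t, Y s = 0 := by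
    refine eq_zero_of_abs_deriv_le_mul_abs_self_of_eq_zero_right (f' := Y) (K := K)
      (fun t _ =>
      (hYc.integral_hasStrictDerivAt 0 t).hasDerivAt.continuousAt.continuousWithinAt)
      (fun t _ => (hYc.integral_hasStrictDerivAt 0 t).hasDerivAt.hasDerivWithinAt)
      intervalIntegral.integral_same fun t ht => ?_
    have ht' : t ∈ Icc 0 T := Ico_subset_Icc_self ht
    rw [Real.norm_of_nonneg (hY0 t ht'), Real.norm_of_nonneg
      (intervalIntegral.integral_nonneg ht.1 fun s hs => hY0 s ⟨hs.1, hs.2.trans ht'.2⟩)]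
    exact hYZ t ht'
  intro t ht
  have hYt : Y t = 0 := le_antisymm (by simpa [hZ t ht] using hYZ t ht) (hY0 t ht)
  exact le_antisymm (by simpa [← hY t ht, hYt] using hle t ht) (hy0 t ht)

theorem setIntegral_le_intervalIntegral_of_le_intervalIntegral {a b t C : ℝ} (ht : 0 ≤ t)
    {v B : ℝ → ℝ} {ρ : ℝ → ℝ → ℝ} (hv : IntegrableOn v (Icc a b)) (hρ : Measurable (uncurry ρ))
    (hρC : ∀ s x, |ρ s x| ≤ C) (hvρ : ∀ x ∈ Icc a b, v x ≤ ∫ s in 0..t, ρ s x)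
    (hB : IntegrableOn B (Icc 0 t)) (hρB : ∀ s ∈ Icc 0 t, ∫ x in Icc a b, ρ s x ≤ B s) :
    ∫ x in Icc a b, v x ≤ ∫ s in 0..t, B s := by
  have hint : Integrable (uncurry fun x s => ρ s x)
      ((volume.restrict (Icc a b)).prod (volume.restrict (Ioc 0 t))) :=
    .of_bound (hρ.comp measurable_swap).aestronglyMeasurable C (.of_forall fun p => hρC p.2 p.1)
  rw [intervalIntegral.integral_of_le ht]
  calc ∫ x in Icc a b, v x
      ≤ ∫ x in Icc a b, ∫ s in Ioc 0 t, ρ s x :=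
        setIntegral_mono_on hv hint.integral_prod_left measurableSet_Icc fun x hx => by
          simpa only [intervalIntegral.integral_of_le ht] using hvρ x hx
    _ = ∫ s in Ioc 0 t, ∫ x in Icc a b, ρ s x := integral_integral_swap hint
    _ ≤ ∫ s in Ioc 0 t, B s :=
        setIntegral_mono_on hint.integral_prod_right (hB.mono_set Ioc_subset_Icc_self)
          measurableSet_Ioc fun s hs => hρB s (Ioc_subset_Icc_self hs)

/-! ### The kernel -/

namespace IsKernel

variable {J : ℝ → ℝ} (hJ : IsKernel J)
include hJ

theorem continuous : Continuous J := hJ.1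

theorem nonneg (x : ℝ) : 0 ≤ J x := hJ.2.2.2.1 x

theorem integrable : Integrable J :=
  Integrable.of_integral_ne_zero (by rw [hJ.2.2.2.2.2]; exact one_ne_zero)

theorem setIntegral_sub_le_one (S : Set ℝ) (x : ℝ) : ∫ y in S, J (x - y) ≤ 1 := by
  rw [← hJ.2.2.2.2.2, ← integral_sub_left_eq_self J volume x]
  exact setIntegral_le_integral (hJ.integrable.comp_sub_left x) (.of_forall fun y => hJ.nonneg _)

theorem measurable_setIntegral_sub (S : Set ℝ) : Measurable fun x => ∫ y in S, J (x - y) :=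
  (hJ.continuous.comp (continuous_fst.sub continuous_snd)).stronglyMeasurable
    |>.integral_prod_right' |>.measurable

theorem intervalIntegral_mul_le {g h M x : ℝ} {v : ℝ → ℝ} (hgh : g ≤ h) (hv : Continuous v)
    (hv0 : ∀ y, 0 ≤ v y) (hvM : ∀ y, v y ≤ M) : ∫ y in g..h, J (x - y) * v y ≤ M := by
  have hM : 0 ≤ M := (hv0 0).trans (hvM 0)
  rw [intervalIntegral.integral_of_le hgh]
  calc ∫ y in Ioc g h, J (x - y) * v y
      ≤ ∫ y in Ioc g h, J (x - y) * M :=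
        setIntegral_mono_on (((hJ.continuous.comp (continuous_const.sub continuous_id)).mul
          hv).integrableOn_Icc.mono_set Ioc_subset_Icc_self)
          ((hJ.integrable.comp_sub_left x).integrableOn.mul_const M) measurableSet_Ioc
          fun y _ => mul_le_mul_of_nonneg_left (hvM y) (hJ.nonneg _)
    _ = M * ∫ y in Ioc g h, J (x - y) := by rw [integral_mul_const, mul_comm]
    _ ≤ M := mul_le_of_le_one_right hM (hJ.setIntegral_sub_le_one _ x)

end IsKernel

/-! ### The defect -/

/-- The defect of a lower solution `v` over an upper solution `u` that lives on `(g, h)`. -/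
noncomputable def defect (g h : ℝ) (u v : ℝ → ℝ) (x : ℝ) : ℝ :=
  (v x - (Ioo g h).indicator u x)⁺

section Defect

variable {g h : ℝ} {u v : ℝ → ℝ} {x : ℝ}

theorem defect_nonneg : 0 ≤ defect g h u v x := posPart_nonneg _

theorem defect_of_mem (hx : x ∈ Ioo g h) : defect g h u v x = (v x - u x)⁺ := by
  rw [defect, indicator_of_mem hx]

theorem defect_of_notMem (hx : x ∉ Ioo g h) (hv : 0 ≤ v x) : defect g h u v x = v x := by
  rw [defect, indicator_of_notMem hx, sub_zero, posPart_eq_self.2 hv]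

theorem defect_le (hu : 0 ≤ u x) (hv : 0 ≤ v x) : defect g h u v x ≤ v x :=
  max_le (sub_le_self _ (indicator_nonneg (fun _ _ => hu) x)) hv

theorem mul_sub_indicator_le_mul_defect {α β : ℝ → ℝ} {k : ℝ} (hα : 0 ≤ α x)
    (hαβ : α x ≤ β x) (hβk : β x ≤ k) (hu : 0 ≤ u x) (hv : 0 ≤ v x) :
    α x * v x - (Ioc g h).indicator (fun y => β y * u y) x ≤ k * defect g h u v x := by
  by_cases hx : x ∈ Ioo g h
  · rw [indicator_of_mem (Ioo_subset_Ioc_self hx), defect_of_mem hx]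
    calc α x * v x - β x * u x ≤ β x * (v x - u x) := by nlinarith
      _ ≤ β x * (v x - u x)⁺ := mul_le_mul_of_nonneg_left (le_posPart _) (hα.trans hαβ)
      _ ≤ k * (v x - u x)⁺ := mul_le_mul_of_nonneg_right hβk (posPart_nonneg _)
  · have hβu : 0 ≤ (Ioc g h).indicator (fun y => β y * u y) x :=
      indicator_apply_nonneg fun _ => mul_nonneg (hα.trans hαβ) hu
    rw [defect_of_notMem hx hv]
    nlinarith

theorem integrableOn_defect {a b : ℝ} (hu : Continuous u) (hv : Continuous v) :
    IntegrableOn (defect g h u v) (Icc a b) :=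
  (hv.integrableOn_Icc.sub (hu.integrableOn_Icc.indicator measurableSet_Ioo)).pos_part

theorem intervalIntegral_sub_le_mul_integral_defect {g₁ h₁ g₂ h₂ a b k : ℝ} {α β : ℝ → ℝ}
    (hgh₁ : g₁ ≤ h₁) (hgh₂ : g₂ ≤ h₂) (hW₁ : Icc g₁ h₁ ⊆ Icc a b) (hW₂ : Icc g₂ h₂ ⊆ Icc a b)
    (hu : Continuous u) (hv : Continuous v) (hu0 : ∀ x, 0 ≤ u x) (hv0 : ∀ x, 0 ≤ v x)
    (hv_out : ∀ x ∉ Ioo g₂ h₂, v x = 0) (hα : Measurable α) (hβ : Measurable β)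
    (hα0 : ∀ x, 0 ≤ α x) (hαβ : ∀ x, α x ≤ β x) (hβk : ∀ x, β x ≤ k) :
    (∫ x in g₂..h₂, α x * v x) - ∫ x in g₁..h₁, β x * u x ≤
      k * ∫ x in Icc a b, defect g₁ h₁ u v x := by
  have hαv : IntegrableOn (fun x => α x * v x) (Icc a b) :=
    hv.integrableOn_Icc.bdd_mul hα.aestronglyMeasurable
      (.of_forall fun x => (Real.norm_of_nonneg (hα0 x)).trans_le ((hαβ x).trans (hβk x)))
  have hβu : IntegrableOn (fun x => β x * u x) (Icc a b) :=
    hu.integrableOn_Icc.bdd_mul hβ.aestronglyMeasurable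
      (.of_forall fun x => (Real.norm_of_nonneg ((hα0 x).trans (hαβ x))).trans_le (hβk x))
  have hv_int : ∫ x in g₂..h₂, α x * v x = ∫ x in Icc a b, α x * v x := by
    rw [intervalIntegral.integral_of_le hgh₂]
    refine (setIntegral_eq_of_subset_of_forall_sdiff_eq_zero measurableSet_Icc
      (Ioc_subset_Icc_self.trans hW₂) fun x hx => ?_).symm
    rw [hv_out x fun h => hx.2 (Ioo_subset_Ioc_self h), mul_zero]
  have hu_int : ∫ x in g₁..h₁, β x * u x =
      ∫ x in Icc a b, (Ioc g₁ h₁).indicator (fun y => β y * u y) x := by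
    rw [intervalIntegral.integral_of_le hgh₁, setIntegral_indicator measurableSet_Ioc,
      inter_eq_right.2 (Ioc_subset_Icc_self.trans hW₁)]
  rw [hv_int, hu_int, ← integral_sub hαv (hβu.indicator measurableSet_Ioc),
    ← integral_const_mul]
  exact integral_mono (hαv.sub (hβu.indicator measurableSet_Ioc))
    ((integrableOn_defect hu hv).const_mul k) fun x =>
      mul_sub_indicator_le_mul_defect (hα0 x) (hαβ x) (hβk x) (hu0 x) (hv0 x)

theorem le_of_integral_defect_eq_zero {g₁ h₁ g₂ h₂ a b : ℝ} (hg : g₁ ≤ g₂) (hh : h₂ ≤ h₁)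
    (hW : Icc g₂ h₂ ⊆ Icc a b) (hu : Continuous u) (hv : Continuous v) (hu0 : ∀ x, 0 ≤ u x)
    (hv_out : ∀ x ∉ Ioo g₂ h₂, v x = 0) (h0 : ∫ x in Icc a b, defect g₁ h₁ u v x = 0) :
    ∀ x ∈ Icc g₂ h₂, v x ≤ u x := by
  have hsub : Ioo g₂ h₂ ⊆ Ioo g₁ h₁ := Ioo_subset_Ioo hg hh
  -- the defect vanishes a.e. on `(g₂, h₂)`, where it is the continuous function `(v - u)⁺`
  have hae : (fun x => (v x - u x)⁺) =ᵐ[volume.restrict (Ioo g₂ h₂)] 0 := by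
    have := (setIntegral_eq_zero_iff_of_nonneg_ae (.of_forall fun _ => defect_nonneg)
      (integrableOn_defect hu hv)).1 h0
    refine ((ae_restrict_of_ae_restrict_of_subset (Ioo_subset_Icc_self.trans hW) this).and
      (ae_restrict_mem measurableSet_Ioo)).mono fun x ⟨hx, hmem⟩ => ?_
    exact (defect_of_mem (hsub hmem)).symm.trans hx
  have heq := Measure.eqOn_open_of_ae_eq hae isOpen_Ioo
    ((hv.sub hu).max continuous_const).continuousOn continuousOn_const
  intro x hx
  rcases eq_or_ne x g₂ with rfl | hxg
  · rw [hv_out _ fun h => h.1.false]; exact hu0 _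
  rcases eq_or_ne x h₂ with rfl | hxh
  · rw [hv_out _ fun h => h.2.false]; exact hu0 _
  exact sub_nonpos.1 (posPart_eq_zero.1
    (heq ⟨lt_of_le_of_ne hx.1 hxg.symm, lt_of_le_of_ne hx.2 hxh⟩))

theorem defect_eq_zero_of_le {g₁ h₁ g₂ h₂ : ℝ} (hg : g₁ ≤ g₂) (hh : h₂ ≤ h₁)
    (hu0 : ∀ x, 0 ≤ u x) (hv_out : ∀ x ∉ Ioo g₂ h₂, v x = 0)
    (hvu : ∀ x ∈ Icc g₂ h₂, v x ≤ u x) (x : ℝ) :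
    defect g₁ h₁ u v x = 0 := by
  by_cases hx : x ∈ Ioo g₂ h₂
  · rw [defect_of_mem (Ioo_subset_Ioo hg hh hx), posPart_eq_zero, sub_nonpos]
    exact hvu x (Ioo_subset_Icc_self hx)
  · rw [defect, hv_out x hx, posPart_eq_zero, zero_sub, neg_nonpos]
    exact indicator_nonneg (fun y _ => hu0 y) x

end Defect

/-! ### Upper and lower solutions -/

def freezeTime (T s : ℝ) : ℝ := max 0 (min T s)

section FreezeTime

variable {T s : ℝ}

theorem freezeTime_mem (hT : 0 ≤ T) (s : ℝ) : freezeTime T s ∈ Icc 0 T :=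
  ⟨le_max_left _ _, max_le hT (min_le_left _ _)⟩

theorem freezeTime_of_mem (hs : s ∈ Icc 0 T) : freezeTime T s = s := by
  rw [freezeTime, min_eq_right hs.2, max_eq_right hs.1]

theorem continuous_freezeTime : Continuous (freezeTime T) :=
  continuous_const.max (continuous_const.min continuous_id)

theorem monotone_freezeTime : Monotone (freezeTime T) :=
  fun _ _ h => max_le_max le_rfl (min_le_min le_rfl h)

theorem HasDerivAt.comp_freezeTime {f : ℝ → ℝ} {f' : ℝ} (hf : HasDerivAt f f' s)
    (hs : s ∈ Ioo 0 T) : HasDerivAt (fun r => f (freezeTime T r)) f' s :=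
  hf.congr_of_eventuallyEq <| eventually_of_mem (isOpen_Ioo.mem_nhds hs) fun _ hr =>
    congrArg f (freezeTime_of_mem (Ioo_subset_Icc_self hr))

end FreezeTime

noncomputable def nonlocalReaction (d : ℝ) (J : ℝ → ℝ) (m : ℝ → ℝ → ℝ) (g h : ℝ → ℝ)
    (u : ℝ → ℝ → ℝ) (t x : ℝ) : ℝ :=
  d * (∫ y in g t..h t, J (x - y) * u t y) - d * u t x + u t x * (m t x - u t x)

noncomputable def rightFlux (J : ℝ → ℝ) (g h : ℝ → ℝ) (u : ℝ → ℝ → ℝ) (t : ℝ) : ℝ :=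
  ∫ x in g t..h t, (∫ y in Ioi (h t), J (x - y)) * u t x

noncomputable def leftFlux (J : ℝ → ℝ) (g h : ℝ → ℝ) (u : ℝ → ℝ → ℝ) (t : ℝ) : ℝ :=
  ∫ x in g t..h t, (∫ y in Iio (g t), J (x - y)) * u t x

/-- The data of the problem live on `[0, T]`; they are extended to all times by freezing time
outside `[0, T]` (see `freezeTime`), which makes them continuous and monotone on `ℝ`. -/
structure IsExpandingDomain (T : ℝ) (g h g' h' : ℝ → ℝ) : Prop where
  continuous_left : Continuous g
  continuous_right : Continuous h
  antitone_left : Antitone g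
  monotone_right : Monotone h
  left_lt_right : ∀ t, g t < h t
  hasDerivAt_left : ∀ t ∈ Ioo 0 T, HasDerivAt g (g' t) t
  hasDerivAt_right : ∀ t ∈ Ioo 0 T, HasDerivAt h (h' t) t

structure IsUpperSolution (T d μ : ℝ) (J : ℝ → ℝ) (m : ℝ → ℝ → ℝ) (g h g' h' : ℝ → ℝ)
    (u : ℝ → ℝ → ℝ) : Prop extends IsExpandingDomain T g h g' h' where
  continuous : Continuous (uncurry u)
  nonneg : ∀ t x, 0 ≤ u t x
  le_hasDerivAt : ∀ t ∈ Ioo 0 T, ∀ x ∈ Ioo (g t) (h t),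
    ∃ D, HasDerivAt (u · x) D t ∧ nonlocalReaction d J m g h u t x ≤ D
  rightFlux_le : ∀ t ∈ Ioo 0 T, μ * rightFlux J g h u t ≤ h' t
  le_leftFlux : ∀ t ∈ Ioo 0 T, g' t ≤ -(μ * leftFlux J g h u t)

structure IsLowerSolution (T d μ : ℝ) (J : ℝ → ℝ) (m : ℝ → ℝ → ℝ) (g h g' h' : ℝ → ℝ)
    (u : ℝ → ℝ → ℝ) : Prop extends IsExpandingDomain T g h g' h' where
  continuous : Continuous (uncurry u)
  nonneg : ∀ t x, 0 ≤ u t x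
  eq_zero : ∀ t, ∀ x ∉ Ioo (g t) (h t), u t x = 0
  hasDerivAt_le : ∀ t ∈ Ioo 0 T, ∀ x ∈ Ioo (g t) (h t),
    ∃ D, HasDerivAt (u · x) D t ∧ D ≤ nonlocalReaction d J m g h u t x
  le_rightFlux : ∀ t ∈ Ioo 0 T, h' t ≤ μ * rightFlux J g h u t
  leftFlux_le : ∀ t ∈ Ioo 0 T, -(μ * leftFlux J g h u t) ≤ g' t

section FreezeTime

variable {T d μ : ℝ} {J : ℝ → ℝ} {m : ℝ → ℝ → ℝ} {g h g' h' : ℝ → ℝ} {u : ℝ → ℝ → ℝ}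

theorem isExpandingDomain_freezeTime (hT : 0 ≤ T) (hgh : ∀ t ∈ Icc 0 T, g t < h t)
    (hg : ∀ t ∈ Icc 0 T, HasDerivAt g (g' t) t) (hh : ∀ t ∈ Icc 0 T, HasDerivAt h (h' t) t)
    (hg' : ∀ t ∈ Icc 0 T, g' t ≤ 0) (hh' : ∀ t ∈ Icc 0 T, 0 ≤ h' t) :
    IsExpandingDomain T (fun t => g (freezeTime T t)) (fun t => h (freezeTime T t)) g' h' := by
  have hgc : ContinuousOn g (Icc 0 T) := fun t ht => (hg t ht).continuousAt.continuousWithinAt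
  have hhc : ContinuousOn h (Icc 0 T) := fun t ht => (hh t ht).continuousAt.continuousWithinAt
  have hanti : AntitoneOn g (Icc 0 T) := antitoneOn_of_deriv_nonpos (convex_Icc 0 T) hgc
    (fun t ht => (hg t (interior_subset ht)).differentiableAt.differentiableWithinAt)
    fun t ht => (hg t (interior_subset ht)).deriv ▸ hg' t (interior_subset ht)
  have hmono : MonotoneOn h (Icc 0 T) := monotoneOn_of_deriv_nonneg (convex_Icc 0 T) hhc
    (fun t ht => (hh t (interior_subset ht)).differentiableAt.differentiableWithinAt)
    fun t ht => (hh t (interior_subset ht)).deriv ▸ hh' t (interior_subset ht)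
  exact
    { continuous_left := hgc.comp_continuous continuous_freezeTime (freezeTime_mem hT)
      continuous_right := hhc.comp_continuous continuous_freezeTime (freezeTime_mem hT)
      antitone_left := fun s r hsr =>
        hanti (freezeTime_mem hT s) (freezeTime_mem hT r) (monotone_freezeTime hsr)
      monotone_right := fun s r hsr =>
        hmono (freezeTime_mem hT s) (freezeTime_mem hT r) (monotone_freezeTime hsr)
      left_lt_right := fun t => hgh _ (freezeTime_mem hT t)
      hasDerivAt_left := fun t ht => (hg t (Ioo_subset_Icc_self ht)).comp_freezeTime ht
      hasDerivAt_right := fun t ht => (hh t (Ioo_subset_Icc_self ht)).comp_freezeTime ht }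

theorem isUpperSolution_freezeTime (hT : 0 ≤ T)
    (hD : IsExpandingDomain T (fun t => g (freezeTime T t)) (fun t => h (freezeTime T t)) g' h')
    (hu : ContinuousOn (uncurry u) (Icc 0 T ×ˢ univ)) (hu0 : ∀ t ∈ Icc 0 T, ∀ x, 0 ≤ u t x)
    (hueq : ∀ t ∈ Ioc 0 T, ∀ x ∈ Ioo (g t) (h t),
      ∃ D, HasDerivAt (u · x) D t ∧ nonlocalReaction d J m g h u t x ≤ D)
    (hright : ∀ t ∈ Ioc 0 T, μ * rightFlux J g h u t ≤ h' t)
    (hleft : ∀ t ∈ Ioc 0 T, g' t ≤ -(μ * leftFlux J g h u t)) :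
    IsUpperSolution T d μ J m (fun t => g (freezeTime T t)) (fun t => h (freezeTime T t)) g' h'
      (fun t => u (freezeTime T t)) where
  toIsExpandingDomain := hD
  continuous := hu.comp_continuous ((continuous_freezeTime.comp continuous_fst).prodMk
    continuous_snd) fun p => ⟨freezeTime_mem hT p.1, mem_univ _⟩
  nonneg t := hu0 _ (freezeTime_mem hT t)
  le_hasDerivAt t ht x hx := by
    simp only [freezeTime_of_mem (Ioo_subset_Icc_self ht)] at hx
    obtain ⟨D, hDu, hD⟩ := hueq t (Ioo_subset_Ioc_self ht) x hx
    refine ⟨D, hDu.comp_freezeTime ht, ?_⟩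
    simpa [nonlocalReaction, freezeTime_of_mem (Ioo_subset_Icc_self ht)] using hD
  rightFlux_le t ht := by
    simpa [rightFlux, freezeTime_of_mem (Ioo_subset_Icc_self ht)] using
      hright t (Ioo_subset_Ioc_self ht)
  le_leftFlux t ht := by
    simpa [leftFlux, freezeTime_of_mem (Ioo_subset_Icc_self ht)] using
      hleft t (Ioo_subset_Ioc_self ht)

theorem isLowerSolution_freezeTime (hT : 0 ≤ T)
    (hD : IsExpandingDomain T (fun t => g (freezeTime T t)) (fun t => h (freezeTime T t)) g' h')
    (hu : ContinuousOn (uncurry u) (Icc 0 T ×ˢ univ)) (hu0 : ∀ t ∈ Icc 0 T, ∀ x, 0 ≤ u t x)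
    (hu_out : ∀ t ∈ Icc 0 T, ∀ x, x ∉ Ioo (g t) (h t) → u t x = 0)
    (hueq : ∀ t ∈ Ioc 0 T, ∀ x ∈ Ioo (g t) (h t),
      ∃ D, HasDerivAt (u · x) D t ∧ D ≤ nonlocalReaction d J m g h u t x)
    (hright : ∀ t ∈ Ioc 0 T, h' t ≤ μ * rightFlux J g h u t)
    (hleft : ∀ t ∈ Ioc 0 T, -(μ * leftFlux J g h u t) ≤ g' t) :
    IsLowerSolution T d μ J m (fun t => g (freezeTime T t)) (fun t => h (freezeTime T t)) g' h'
      (fun t => u (freezeTime T t)) where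
  toIsExpandingDomain := hD
  continuous := hu.comp_continuous ((continuous_freezeTime.comp continuous_fst).prodMk
    continuous_snd) fun p => ⟨freezeTime_mem hT p.1, mem_univ _⟩
  nonneg t := hu0 _ (freezeTime_mem hT t)
  eq_zero t := hu_out _ (freezeTime_mem hT t)
  hasDerivAt_le t ht x hx := by
    simp only [freezeTime_of_mem (Ioo_subset_Icc_self ht)] at hx
    obtain ⟨D, hDu, hD⟩ := hueq t (Ioo_subset_Ioc_self ht) x hx
    refine ⟨D, hDu.comp_freezeTime ht, ?_⟩
    simpa [nonlocalReaction, freezeTime_of_mem (Ioo_subset_Icc_self ht)] using hD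
  le_rightFlux t ht := by
    simpa [rightFlux, freezeTime_of_mem (Ioo_subset_Icc_self ht)] using
      hright t (Ioo_subset_Ioc_self ht)
  leftFlux_le t ht := by
    simpa [leftFlux, freezeTime_of_mem (Ioo_subset_Icc_self ht)] using
      hleft t (Ioo_subset_Ioc_self ht)

end FreezeTime

/-! ### Growth of the defect -/

noncomputable def defectMass (a b : ℝ) (g h : ℝ → ℝ) (u v : ℝ → ℝ → ℝ) (t : ℝ) : ℝ :=
  ∫ x in Icc a b, defect (g t) (h t) (u t) (v t) x

noncomputable def domainExcess (gb hb gl hl : ℝ → ℝ) (t : ℝ) : ℝ :=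
  (gb t - gl t)⁺ + (hl t - hb t)⁺

/-- A bound for the growth rate of the defect: `K q` from the reaction, `c ∫ q` from the nonlocal
diffusion, and `R` where the lower domain sticks out of the upper one. -/
noncomputable def defectRate (K c R a b : ℝ) (gb hb gl hl : ℝ → ℝ) (ub ul : ℝ → ℝ → ℝ)
    (t x : ℝ) : ℝ :=
  K * defect (gb t) (hb t) (ub t) (ul t) x + c * defectMass a b gb hb ub ul t +
    (Ioc (gl t) (gb t) ∪ Ico (hb t) (hl t)).indicator (fun _ => R) x

section Comparison

variable {T d μ K M Jb a b : ℝ} {J : ℝ → ℝ} {m : ℝ → ℝ → ℝ}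
  {gb hb gl hl gb' hb' gl' hl' : ℝ → ℝ} {ub ul : ℝ → ℝ → ℝ}

theorem IsLowerSolution.mem_Ioo_of_pos (hL : IsLowerSolution T d μ J m gl hl gl' hl' ul)
    {t x : ℝ} (hx : 0 < ul t x) : x ∈ Ioo (gl t) (hl t) :=
  by_contra fun h => hx.ne' (hL.eq_zero t x h)

theorem nonlocalReaction_le (hJ : IsKernel J) (hd : 0 ≤ d) (hK : 0 ≤ K)
    (hm : ∀ t x, m t x ≤ K) {g h : ℝ → ℝ} {u : ℝ → ℝ → ℝ} {t : ℝ} (hgh : g t ≤ h t)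
    (hu : Continuous (u t)) (hu0 : ∀ y, 0 ≤ u t y) (huM : ∀ y, u t y ≤ M) (x : ℝ) :
    nonlocalReaction d J m g h u t x ≤ d * M + K * M := by
  have hI := hJ.intervalIntegral_mul_le (x := x) hgh hu hu0 huM
  unfold nonlocalReaction
  nlinarith [mul_le_mul_of_nonneg_left hI hd, mul_nonneg hd (hu0 x),
    mul_le_mul_of_nonneg_left (hm t x) (hu0 x), mul_le_mul_of_nonneg_right (huM x) hK,
    sq_nonneg (u t x)]

theorem nonlocalReaction_sub_le (hJ : IsKernel J) (hJb : ∀ x, J x ≤ Jb) (hd : 0 ≤ d)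
    (hm : ∀ t x, m t x ≤ K) (hU : IsUpperSolution T d μ J m gb hb gb' hb' ub)
    (hL : IsLowerSolution T d μ J m gl hl gl' hl' ul) {t : ℝ} (hWb : Icc (gb t) (hb t) ⊆ Icc a b)
    (hWl : Icc (gl t) (hl t) ⊆ Icc a b) {x : ℝ} (hx : ub t x ≤ ul t x) :
    nonlocalReaction d J m gl hl ul t x - nonlocalReaction d J m gb hb ub t x ≤
      d * Jb * defectMass a b gb hb ub ul t + K * (ul t x - ub t x) := by
  have hJx : Continuous fun y => J (x - y) :=
    hJ.continuous.comp (continuous_const.sub continuous_id)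
  have hI := intervalIntegral_sub_le_mul_integral_defect (hU.left_lt_right t).le
    (hL.left_lt_right t).le hWb hWl (hU.continuous.uncurry_left t) (hL.continuous.uncurry_left t)
    (hU.nonneg t) (hL.nonneg t) (hL.eq_zero t) hJx.measurable hJx.measurable
    (fun y => hJ.nonneg _) (fun _ => le_rfl) fun y => hJb (x - y)
  have hreact :
      ul t x * (m t x - ul t x) - ub t x * (m t x - ub t x) ≤ K * (ul t x - ub t x) := by
    nlinarith [mul_le_mul_of_nonneg_left (hm t x) (sub_nonneg.2 hx), hU.nonneg t x, hL.nonneg t x]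
  unfold nonlocalReaction defectMass
  nlinarith [mul_le_mul_of_nonneg_left hI hd, mul_nonneg hd (sub_nonneg.2 hx)]

theorem rightFlux_sub_le (hJ : IsKernel J) (hU : IsUpperSolution T d μ J m gb hb gb' hb' ub)
    (hL : IsLowerSolution T d μ J m gl hl gl' hl' ul) {t : ℝ} (hWb : Icc (gb t) (hb t) ⊆ Icc a b)
    (hWl : Icc (gl t) (hl t) ⊆ Icc a b) (hh : hb t ≤ hl t) :
    rightFlux J gl hl ul t - rightFlux J gb hb ub t ≤ defectMass a b gb hb ub ul t := by
  simpa only [one_mul, rightFlux, defectMass] using intervalIntegral_sub_le_mul_integral_defect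
    (hU.left_lt_right t).le (hL.left_lt_right t).le hWb hWl (hU.continuous.uncurry_left t)
    (hL.continuous.uncurry_left t) (hU.nonneg t) (hL.nonneg t) (hL.eq_zero t)
    (hJ.measurable_setIntegral_sub _) (hJ.measurable_setIntegral_sub _)
    (fun x => integral_nonneg fun y => hJ.nonneg _)
    (fun x => setIntegral_mono_set (hJ.integrable.comp_sub_left x).integrableOn
      (.of_forall fun y => hJ.nonneg _) (Ioi_subset_Ioi hh).eventuallyLE)
    fun x => hJ.setIntegral_sub_le_one _ x

theorem leftFlux_sub_le (hJ : IsKernel J) (hU : IsUpperSolution T d μ J m gb hb gb' hb' ub)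
    (hL : IsLowerSolution T d μ J m gl hl gl' hl' ul) {t : ℝ} (hWb : Icc (gb t) (hb t) ⊆ Icc a b)
    (hWl : Icc (gl t) (hl t) ⊆ Icc a b) (hg : gl t ≤ gb t) :
    leftFlux J gl hl ul t - leftFlux J gb hb ub t ≤ defectMass a b gb hb ub ul t := by
  simpa only [one_mul, leftFlux, defectMass] using intervalIntegral_sub_le_mul_integral_defect
    (hU.left_lt_right t).le (hL.left_lt_right t).le hWb hWl (hU.continuous.uncurry_left t)
    (hL.continuous.uncurry_left t) (hU.nonneg t) (hL.nonneg t) (hL.eq_zero t)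
    (hJ.measurable_setIntegral_sub _) (hJ.measurable_setIntegral_sub _)
    (fun x => integral_nonneg fun y => hJ.nonneg _)
    (fun x => setIntegral_mono_set (hJ.integrable.comp_sub_left x).integrableOn
      (.of_forall fun y => hJ.nonneg _) (Iio_subset_Iio hg).eventuallyLE)
    fun x => hJ.setIntegral_sub_le_one _ x

theorem measurable_defect {g h : ℝ → ℝ} {u v : ℝ → ℝ → ℝ} (hg : Continuous g)
    (hh : Continuous h) (hu : Continuous (uncurry u)) (hv : Continuous (uncurry v)) :
    Measurable (uncurry fun t x => defect (g t) (h t) (u t) (v t) x) :=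
  (hv.measurable.sub (hu.measurable.indicator
    ((measurableSet_lt (hg.measurable.comp measurable_fst) measurable_snd).inter
      (measurableSet_lt measurable_snd (hh.measurable.comp measurable_fst))))).max
    measurable_const

theorem measurable_defectMass {g h : ℝ → ℝ} {u v : ℝ → ℝ → ℝ} (hg : Continuous g)
    (hh : Continuous h) (hu : Continuous (uncurry u)) (hv : Continuous (uncurry v)) :
    Measurable (defectMass a b g h u v) :=
  (measurable_defect hg hh hu hv).stronglyMeasurable.integral_prod_right.measurable

theorem defectMass_nonneg {g h : ℝ → ℝ} {u v : ℝ → ℝ → ℝ} {t : ℝ} :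
    0 ≤ defectMass a b g h u v t :=
  integral_nonneg fun _ => defect_nonneg

theorem defectMass_le {g h : ℝ → ℝ} {u v : ℝ → ℝ → ℝ} (hab : a ≤ b) (hu0 : ∀ t x, 0 ≤ u t x)
    (hv0 : ∀ t x, 0 ≤ v t x) (hvM : ∀ t x, v t x ≤ M) (t : ℝ) :
    defectMass a b g h u v t ≤ M * (b - a) := by
  rw [← Real.volume_real_Icc_of_le hab]
  refine (Real.le_norm_self _).trans (norm_setIntegral_le_of_norm_le_const measure_Icc_lt_top
    fun x _ => ?_)
  rw [Real.norm_of_nonneg defect_nonneg]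
  exact (defect_le (hu0 t x) (hv0 t x)).trans (hvM t x)

theorem integrableOn_defectMass {g h : ℝ → ℝ} {u v : ℝ → ℝ → ℝ} {s : Set ℝ}
    (hs : volume s ≠ ⊤) (hab : a ≤ b) (hg : Continuous g) (hh : Continuous h)
    (hu : Continuous (uncurry u)) (hv : Continuous (uncurry v)) (hu0 : ∀ t x, 0 ≤ u t x)
    (hv0 : ∀ t x, 0 ≤ v t x) (hvM : ∀ t x, v t x ≤ M) : IntegrableOn (defectMass a b g h u v) s :=
  Measure.integrableOn_of_bounded hs (measurable_defectMass hg hh hu hv).aestronglyMeasurable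
    (.of_forall fun t => (Real.norm_of_nonneg defectMass_nonneg).trans_le
      (defectMass_le hab hu0 hv0 hvM t))

theorem continuous_domainExcess (hgb : Continuous gb) (hhb : Continuous hb)
    (hgl : Continuous gl) (hhl : Continuous hl) : Continuous (domainExcess gb hb gl hl) :=
  ((hgb.sub hgl).max continuous_const).add ((hhl.sub hhb).max continuous_const)

theorem domainExcess_nonneg {t : ℝ} : 0 ≤ domainExcess gb hb gl hl t :=
  add_nonneg (posPart_nonneg _) (posPart_nonneg _)

theorem domainExcess_eq_zero {t : ℝ} :
    domainExcess gb hb gl hl t = 0 ↔ gb t ≤ gl t ∧ hl t ≤ hb t := by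
  rw [domainExcess, add_eq_zero_iff_of_nonneg (posPart_nonneg _) (posPart_nonneg _),
    posPart_eq_zero, posPart_eq_zero, sub_nonpos, sub_nonpos]

section DefectRate

variable {c R : ℝ}

theorem defectRate_nonneg (hK : 0 ≤ K) (hc : 0 ≤ c) (hR : 0 ≤ R) (t x : ℝ) :
    0 ≤ defectRate K c R a b gb hb gl hl ub ul t x :=
  add_nonneg (add_nonneg (mul_nonneg hK defect_nonneg) (mul_nonneg hc defectMass_nonneg))
    (indicator_nonneg (fun _ _ => hR) x)

theorem abs_defectRate_le (hK : 0 ≤ K) (hc : 0 ≤ c) (hR : 0 ≤ R) (hab : a ≤ b)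
    (hub0 : ∀ t x, 0 ≤ ub t x) (hul0 : ∀ t x, 0 ≤ ul t x) (hM : ∀ t x, ul t x ≤ M) (t x : ℝ) :
    |defectRate K c R a b gb hb gl hl ub ul t x| ≤ K * M + c * (M * (b - a)) + R := by
  rw [abs_of_nonneg (defectRate_nonneg hK hc hR t x)]
  exact add_le_add (add_le_add
    (mul_le_mul_of_nonneg_left ((defect_le (hub0 t x) (hul0 t x)).trans (hM t x)) hK)
    (mul_le_mul_of_nonneg_left (defectMass_le hab hub0 hul0 hM t) hc))
    (indicator_le_self' (fun _ _ => hR) x)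

theorem measurable_defectRate (hgb : Continuous gb) (hhb : Continuous hb) (hgl : Continuous gl)
    (hhl : Continuous hl) (hub : Continuous (uncurry ub)) (hul : Continuous (uncurry ul)) :
    Measurable (uncurry (defectRate K c R a b gb hb gl hl ub ul)) :=
  (((measurable_defect hgb hhb hub hul).const_mul K).add
    (((measurable_defectMass hgb hhb hub hul).comp measurable_fst).const_mul c)).add
    (measurable_const.indicator
      (((measurableSet_lt (hgl.measurable.comp measurable_fst) measurable_snd).inter
        (measurableSet_le measurable_snd (hgb.measurable.comp measurable_fst))).union
      ((measurableSet_le (hhb.measurable.comp measurable_fst) measurable_snd).inter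
        (measurableSet_lt measurable_snd (hhl.measurable.comp measurable_fst)))))

theorem integral_defectRate_le (hab : a ≤ b) (hR : 0 ≤ R) (hub : Continuous (uncurry ub))
    (hul : Continuous (uncurry ul)) (t : ℝ) :
    ∫ x in Icc a b, defectRate K c R a b gb hb gl hl ub ul t x ≤
      (K + c * (b - a)) * defectMass a b gb hb ub ul t + R * domainExcess gb hb gl hl t := by
  set E := Ioc (gl t) (gb t) ∪ Ico (hb t) (hl t)
  have hE : volume E < ⊤ := measure_union_lt_top measure_Ioc_lt_top measure_Ico_lt_top
  have hEint : Integrable (E.indicator fun _ => R) :=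
    (integrableOn_const hE.ne).integrable_indicator (measurableSet_Ioc.union measurableSet_Ico)
  have hq := integrableOn_defect (a := a) (b := b) (g := gb t) (h := hb t)
    (hub.uncurry_left t) (hul.uncurry_left t)
  have hind : ∫ x in Icc a b, E.indicator (fun _ => R) x ≤ R * domainExcess gb hb gl hl t :=
    calc ∫ x in Icc a b, E.indicator (fun _ => R) x
        ≤ ∫ x, E.indicator (fun _ => R) x :=
          setIntegral_le_integral hEint (.of_forall (indicator_nonneg fun _ _ => hR))
      _ = volume.real E * R := by
          rw [integral_indicator_const R (measurableSet_Ioc.union measurableSet_Ico), smul_eq_mul]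
      _ ≤ R * domainExcess gb hb gl hl t := by
          rw [mul_comm]
          refine mul_le_mul_of_nonneg_left ((measureReal_union_le _ _).trans_eq ?_) hR
          rw [Real.volume_real_Ioc, Real.volume_real_Ico]; rfl
  unfold defectRate
  rw [integral_add, integral_add, integral_const_mul, setIntegral_const, smul_eq_mul,
    Real.volume_real_Icc_of_le hab]
  · unfold defectMass
    linarith
  exacts [hq.const_mul K, integrableOn_const measure_Icc_lt_top.ne,
    (hq.const_mul K).add (integrableOn_const measure_Icc_lt_top.ne), hEint.integrableOn]

theorem hasDerivAt_le_defectRate_of_notMem (hJ : IsKernel J) (hd : 0 ≤ d) (hK : 0 ≤ K)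
    (hc : 0 ≤ c) (hm : ∀ t x, m t x ≤ K) (hM : ∀ t x, ul t x ≤ M)
    (hL : IsLowerSolution T d μ J m gl hl gl' hl' ul) {s x : ℝ} (hs : s ∈ Ioo 0 T)
    (hx : x ∉ Ioo (gb s) (hb s)) (hpos : 0 < ul s x) :
    ∃ D, HasDerivAt (ul · x) D s ∧
      D ≤ defectRate K c (d * M + K * M) a b gb hb gl hl ub ul s x := by
  have hxl := hL.mem_Ioo_of_pos hpos
  have hE : x ∈ Ioc (gl s) (gb s) ∪ Ico (hb s) (hl s) := by
    rw [mem_Ioo, not_and_or, not_lt, not_lt] at hx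
    exact hx.imp (fun h => ⟨hxl.1, h⟩) fun h => ⟨h, hxl.2⟩
  obtain ⟨D, hD, hDle⟩ := hL.hasDerivAt_le s hs x hxl
  refine ⟨D, hD, hDle.trans <| (nonlocalReaction_le hJ hd hK hm (hL.left_lt_right s).le
    (hL.continuous.uncurry_left s) (hL.nonneg s) (hM s) x).trans ?_⟩
  rw [defectRate, indicator_of_mem hE]
  exact le_add_of_nonneg_left (add_nonneg (mul_nonneg hK defect_nonneg)
    (mul_nonneg hc defectMass_nonneg))

theorem hasDerivAt_sub_le_defectRate_of_mem (hJ : IsKernel J) (hJb : ∀ x, J x ≤ Jb)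
    (hd : 0 ≤ d) (hm : ∀ t x, m t x ≤ K) (hR : 0 ≤ R)
    (hU : IsUpperSolution T d μ J m gb hb gb' hb' ub)
    (hL : IsLowerSolution T d μ J m gl hl gl' hl' ul) {s x : ℝ} (hs : s ∈ Ioo 0 T)
    (hWb : Icc (gb s) (hb s) ⊆ Icc a b) (hWl : Icc (gl s) (hl s) ⊆ Icc a b)
    (hx : x ∈ Ioo (gb s) (hb s)) (hpos : 0 < ul s x - ub s x) :
    ∃ D, HasDerivAt (fun r => ul r x - ub r x) D s ∧
      D ≤ defectRate K (d * Jb) R a b gb hb gl hl ub ul s x := by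
  obtain ⟨Dl, hDl, hDl'⟩ :=
    hL.hasDerivAt_le s hs x (hL.mem_Ioo_of_pos (by linarith [hU.nonneg s x]))
  obtain ⟨Du, hDu, hDu'⟩ := hU.le_hasDerivAt s hs x hx
  refine ⟨Dl - Du, hDl.sub hDu, ?_⟩
  have := nonlocalReaction_sub_le hJ hJb hd hm hU hL hWb hWl (sub_pos.1 hpos).le
  rw [defectRate, defect_of_mem hx, posPart_eq_self.2 hpos.le]
  exact le_add_of_le_of_nonneg (by linarith) (indicator_nonneg (fun _ _ => hR) x)

end DefectRate

theorem defect_le_add_intervalIntegral_defectRate (hJ : IsKernel J) (hJb : ∀ x, J x ≤ Jb)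
    (hd : 0 ≤ d) (hK : 0 ≤ K) (hm : ∀ t x, m t x ≤ K) (hM : ∀ t x, ul t x ≤ M)
    (hU : IsUpperSolution T d μ J m gb hb gb' hb' ub)
    (hL : IsLowerSolution T d μ J m gl hl gl' hl' ul) (hab : a ≤ b)
    (hWb : ∀ t ∈ Icc 0 T, Icc (gb t) (hb t) ⊆ Icc a b)
    (hWl : ∀ t ∈ Icc 0 T, Icc (gl t) (hl t) ⊆ Icc a b) {t : ℝ} (ht : t ∈ Icc 0 T) (x : ℝ) :
    defect (gb t) (hb t) (ub t) (ul t) x ≤ defect (gb 0) (hb 0) (ub 0) (ul 0) x +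
      ∫ s in 0..t, defectRate K (d * Jb) (d * M + K * M) a b gb hb gl hl ub ul s x := by
  classical
  have hc : 0 ≤ d * Jb := mul_nonneg hd ((hJ.nonneg 0).trans (hJb 0))
  have hR : 0 ≤ d * M + K * M := by
    have := (hL.nonneg 0 0).trans (hM 0 0); positivity
  -- `x` enters the upper domain at most once, and the defect is `(ul - ub)⁺` from then on
  set S := {s | x ∈ Ioo (gb s) (hb s)}
  have hS : IsUpperSet S := fun s r hsr hs =>
    ⟨(hU.antitone_left hsr).trans_lt hs.1, hs.2.trans_le (hU.monotone_right hsr)⟩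
  have hq : ∀ s, defect (gb s) (hb s) (ub s) (ul s) x =
      (S.piecewise (fun r => ul r x - ub r x) (fun r => ul r x) s)⁺ := fun s => by
    by_cases hs : s ∈ S
    · rw [piecewise_eq_of_mem _ _ _ hs, defect_of_mem hs]
    · rw [piecewise_eq_of_notMem _ _ _ hs, defect_of_notMem hs (hL.nonneg s x),
        posPart_eq_self.2 (hL.nonneg s x)]
  have hsT : ∀ s ∈ Ioo 0 t, s ∈ Ioo 0 T := fun s hs => ⟨hs.1, hs.2.trans_le ht.2⟩
  rw [hq, hq]
  refine posPart_piecewise_le_posPart_add_integral ht.1 hS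
    (hL.continuous.uncurry_right x).continuousOn
    ((hL.continuous.uncurry_right x).sub (hU.continuous.uncurry_right x)).continuousOn
    (fun s _ => sub_le_self _ (hU.nonneg s x))
    (Measure.integrableOn_of_bounded measure_Icc_lt_top.ne
      ((measurable_defectRate hU.continuous_left hU.continuous_right hL.continuous_left
        hL.continuous_right hU.continuous hL.continuous).comp
          (measurable_id.prodMk measurable_const)).aestronglyMeasurable
      (.of_forall fun s => abs_defectRate_le hK hc hR hab hU.nonneg hL.nonneg hM s x))
    (fun s _ => defectRate_nonneg hK hc hR s x) (fun s hs hsS hpos => ?_)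
    fun s hs hsS hpos => ?_
  · exact hasDerivAt_le_defectRate_of_notMem hJ hd hK hc hm hM hL (hsT s hs) hsS hpos
  · have hsT' := Ioo_subset_Icc_self (hsT s hs)
    exact hasDerivAt_sub_le_defectRate_of_mem hJ hJb hd hm hR hU hL (hsT s hs) (hWb s hsT')
      (hWl s hsT') hsS hpos

theorem defectMass_le_intervalIntegral (hJ : IsKernel J) (hJb : ∀ x, J x ≤ Jb)
    (hd : 0 ≤ d) (hK : 0 ≤ K) (hm : ∀ t x, m t x ≤ K) (hM : ∀ t x, ul t x ≤ M)
    (hU : IsUpperSolution T d μ J m gb hb gb' hb' ub)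
    (hL : IsLowerSolution T d μ J m gl hl gl' hl' ul) (hab : a ≤ b)
    (hWb : ∀ t ∈ Icc 0 T, Icc (gb t) (hb t) ⊆ Icc a b)
    (hWl : ∀ t ∈ Icc 0 T, Icc (gl t) (hl t) ⊆ Icc a b)
    (h0 : ∀ x, defect (gb 0) (hb 0) (ub 0) (ul 0) x = 0) {t : ℝ} (ht : t ∈ Icc 0 T) :
    defectMass a b gb hb ub ul t ≤ ∫ s in 0..t, ((K + d * Jb * (b - a)) *
      defectMass a b gb hb ub ul s + (d * M + K * M) * domainExcess gb hb gl hl s) := by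
  have hc : 0 ≤ d * Jb := mul_nonneg hd ((hJ.nonneg 0).trans (hJb 0))
  have hR : 0 ≤ d * M + K * M := by
    have := (hL.nonneg 0 0).trans (hM 0 0); positivity
  refine setIntegral_le_intervalIntegral_of_le_intervalIntegral ht.1
    (integrableOn_defect (hU.continuous.uncurry_left t) (hL.continuous.uncurry_left t))
    (measurable_defectRate hU.continuous_left hU.continuous_right hL.continuous_left
      hL.continuous_right hU.continuous hL.continuous)
    (abs_defectRate_le hK hc hR hab hU.nonneg hL.nonneg hM) (fun x _ => ?_)
    (((integrableOn_defectMass measure_Icc_lt_top.ne hab hU.continuous_left hU.continuous_right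
      hU.continuous hL.continuous hU.nonneg hL.nonneg hM).const_mul _).add
      ((continuous_domainExcess hU.continuous_left hU.continuous_right hL.continuous_left
        hL.continuous_right).integrableOn_Icc.const_mul _))
    fun s _ => integral_defectRate_le hab hR hU.continuous hL.continuous s
  simpa [h0] using defect_le_add_intervalIntegral_defectRate hJ hJb hd hK hm hM hU hL hab hWb
    hWl ht x

theorem domainExcess_le_intervalIntegral (hJ : IsKernel J) (hμ : 0 ≤ μ)
    (hU : IsUpperSolution T d μ J m gb hb gb' hb' ub)
    (hL : IsLowerSolution T d μ J m gl hl gl' hl' ul)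
    (hWb : ∀ t ∈ Icc 0 T, Icc (gb t) (hb t) ⊆ Icc a b)
    (hWl : ∀ t ∈ Icc 0 T, Icc (gl t) (hl t) ⊆ Icc a b)
    (hG : IntegrableOn (defectMass a b gb hb ub ul) (Icc 0 T)) (hg0 : gb 0 ≤ gl 0)
    (hh0 : hl 0 ≤ hb 0) {t : ℝ} (ht : t ∈ Icc 0 T) :
    domainExcess gb hb gl hl t ≤ 2 * ∫ s in 0..t, μ * defectMass a b gb hb ub ul s := by
  have hGt := (hG.mono_set (Icc_subset_Icc le_rfl ht.2)).const_mul μ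
  have hWs : ∀ s ∈ Ioo 0 t, s ∈ Ioo 0 T ∧ Icc (gb s) (hb s) ⊆ Icc a b ∧
      Icc (gl s) (hl s) ⊆ Icc a b := fun s hs =>
    have hsT : s ∈ Ioo 0 T := ⟨hs.1, hs.2.trans_le ht.2⟩
    ⟨hsT, hWb s (Ioo_subset_Icc_self hsT), hWl s (Ioo_subset_Icc_self hsT)⟩
  have hleft := posPart_le_posPart_add_integral (f := fun s => gb s - gl s) ht.1
    (hU.continuous_left.sub hL.continuous_left).continuousOn hGt
    (fun s _ => mul_nonneg hμ defectMass_nonneg) fun s hs hpos => by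
      obtain ⟨hsT, hWbs, hWls⟩ := hWs s hs
      refine ⟨gb' s - gl' s, (hU.hasDerivAt_left s hsT).sub (hL.hasDerivAt_left s hsT), ?_⟩
      have := leftFlux_sub_le hJ hU hL hWbs hWls (sub_pos.1 hpos).le
      nlinarith [hL.leftFlux_le s hsT, hU.le_leftFlux s hsT]
  have hright := posPart_le_posPart_add_integral (f := fun s => hl s - hb s) ht.1
    (hL.continuous_right.sub hU.continuous_right).continuousOn hGt
    (fun s _ => mul_nonneg hμ defectMass_nonneg) fun s hs hpos => by
      obtain ⟨hsT, hWbs, hWls⟩ := hWs s hs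
      refine ⟨hl' s - hb' s, (hL.hasDerivAt_right s hsT).sub (hU.hasDerivAt_right s hsT), ?_⟩
      have := rightFlux_sub_le hJ hU hL hWbs hWls (sub_pos.1 hpos).le
      nlinarith [hL.le_rightFlux s hsT, hU.rightFlux_le s hsT]
  rw [posPart_eq_zero.2 (sub_nonpos.2 hg0), zero_add] at hleft
  rw [posPart_eq_zero.2 (sub_nonpos.2 hh0), zero_add] at hright
  rw [domainExcess]
  linarith

theorem defectMass_add_domainExcess_le_mul_integral (hJ : IsKernel J) (hJb : ∀ x, J x ≤ Jb)
    (hd : 0 ≤ d) (hμ : 0 ≤ μ) (hK : 0 ≤ K) (hm : ∀ t x, m t x ≤ K) (hM : ∀ t x, ul t x ≤ M)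
    (hU : IsUpperSolution T d μ J m gb hb gb' hb' ub)
    (hL : IsLowerSolution T d μ J m gl hl gl' hl' ul) (hab : a ≤ b)
    (hWb : ∀ t ∈ Icc 0 T, Icc (gb t) (hb t) ⊆ Icc a b)
    (hWl : ∀ t ∈ Icc 0 T, Icc (gl t) (hl t) ⊆ Icc a b) (hg0 : gb 0 ≤ gl 0) (hh0 : hl 0 ≤ hb 0)
    (h0 : ∀ x, defect (gb 0) (hb 0) (ub 0) (ul 0) x = 0) {t : ℝ} (ht : t ∈ Icc 0 T) :
    defectMass a b gb hb ub ul t + domainExcess gb hb gl hl t ≤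
      (K + d * Jb * (b - a) + (d * M + K * M) + 2 * μ) *
        ∫ s in 0..t, (defectMass a b gb hb ub ul s + domainExcess gb hb gl hl s) := by
  set G := defectMass a b gb hb ub ul
  set E := domainExcess gb hb gl hl
  set C := K + d * Jb * (b - a)
  set R := d * M + K * M
  have hC : 0 ≤ C := by
    have := (hJ.nonneg 0).trans (hJb 0); have := sub_nonneg.2 hab; positivity
  have hR : 0 ≤ R := by
    have := (hL.nonneg 0 0).trans (hM 0 0); positivity
  have hG : IntegrableOn G (Icc 0 T) := integrableOn_defectMass measure_Icc_lt_top.ne hab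
    hU.continuous_left hU.continuous_right hU.continuous hL.continuous hU.nonneg hL.nonneg hM
  have hE := continuous_domainExcess hU.continuous_left hU.continuous_right hL.continuous_left
    hL.continuous_right
  have hI : ∀ f : ℝ → ℝ, IntegrableOn f (Icc 0 T) → IntervalIntegrable f volume 0 t :=
    fun f hf => (hf.mono_set (uIcc_subset_Icc ⟨le_rfl, ht.1.trans ht.2⟩ ht)).intervalIntegrable
  have hB : IntervalIntegrable (fun s => C * G s + R * E s) volume 0 t :=
    hI _ ((hG.const_mul C).add (hE.integrableOn_Icc.const_mul R))
  have hμG : IntervalIntegrable (fun s => 2 * μ * G s) volume 0 t := hI _ (hG.const_mul _)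
  rw [← intervalIntegral.integral_const_mul]
  calc G t + E t
      ≤ (∫ s in 0..t, (C * G s + R * E s)) + ∫ s in 0..t, 2 * μ * G s := by
        have := domainExcess_le_intervalIntegral hJ hμ hU hL hWb hWl hG hg0 hh0 ht
        simp only [mul_assoc, intervalIntegral.integral_const_mul] at this ⊢
        linarith [defectMass_le_intervalIntegral hJ hJb hd hK hm hM hU hL hab hWb hWl h0 ht]
    _ = ∫ s in 0..t, (C * G s + R * E s + 2 * μ * G s) :=
        (intervalIntegral.integral_add hB hμG).symm
    _ ≤ ∫ s in 0..t, (C + R + 2 * μ) * (G s + E s) :=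
        intervalIntegral.integral_mono_on ht.1 (hB.add hμG)
          (hI _ ((hG.add hE.integrableOn_Icc).const_mul _)) fun s _ => by
            have hGs : 0 ≤ G s := defectMass_nonneg
            have hEs : 0 ≤ E s := domainExcess_nonneg
            nlinarith [mul_nonneg hC hEs, mul_nonneg hμ hEs, mul_nonneg hR hGs]

end Comparison

theorem comparison_principle {T d μ K M : ℝ} {J : ℝ → ℝ} {m : ℝ → ℝ → ℝ}
    {gb hb gl hl gb' hb' gl' hl' : ℝ → ℝ} {ub ul : ℝ → ℝ → ℝ} (hJ : IsKernel J)
    (hd : 0 ≤ d) (hμ : 0 ≤ μ) (hK : 0 ≤ K) (hm : ∀ t x, m t x ≤ K) (hM : ∀ t x, ul t x ≤ M)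
    (hU : IsUpperSolution T d μ J m gb hb gb' hb' ub)
    (hL : IsLowerSolution T d μ J m gl hl gl' hl' ul) (hg0 : gb 0 ≤ gl 0) (hh0 : hl 0 ≤ hb 0)
    (hu0 : ∀ x ∈ Icc (gl 0) (hl 0), ul 0 x ≤ ub 0 x) :
    (∀ t ∈ Icc 0 T, gb t ≤ gl t ∧ hl t ≤ hb t) ∧
      (∀ t ∈ Icc 0 T, ∀ x ∈ Icc (gl t) (hl t), ul t x ≤ ub t x) := by
  obtain ⟨Jb, hJb⟩ := hJ.2.1
  set a := min (gb T) (gl T)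
  set b := max (hb T) (hl T)
  have hWb : ∀ t ∈ Icc 0 T, Icc (gb t) (hb t) ⊆ Icc a b := fun t ht => Icc_subset_Icc
    ((min_le_left _ _).trans (hU.antitone_left ht.2))
    ((hU.monotone_right ht.2).trans (le_max_left _ _))
  have hWl : ∀ t ∈ Icc 0 T, Icc (gl t) (hl t) ⊆ Icc a b := fun t ht => Icc_subset_Icc
    ((min_le_right _ _).trans (hL.antitone_left ht.2))
    ((hL.monotone_right ht.2).trans (le_max_right _ _))
  have hab : a ≤ b := (min_le_right _ _).trans ((hL.left_lt_right T).le.trans (le_max_right _ _))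
  have hzero := eq_zero_of_le_mul_integral
    (y := fun t => defectMass a b gb hb ub ul t + domainExcess gb hb gl hl t)
    ((integrableOn_defectMass measure_Icc_lt_top.ne hab hU.continuous_left hU.continuous_right
      hU.continuous hL.continuous hU.nonneg hL.nonneg hM).add
      (continuous_domainExcess hU.continuous_left hU.continuous_right hL.continuous_left
        hL.continuous_right).integrableOn_Icc)
    (fun t _ => add_nonneg defectMass_nonneg domainExcess_nonneg)
    fun t ht => defectMass_add_domainExcess_le_mul_integral hJ hJb hd hμ hK hm hM hU hL hab hWb
      hWl hg0 hh0 (defect_eq_zero_of_le hg0 hh0 (hU.nonneg 0) (hL.eq_zero 0) hu0) ht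
  have hvanish : ∀ t ∈ Icc 0 T,
      defectMass a b gb hb ub ul t = 0 ∧ domainExcess gb hb gl hl t = 0 := fun t ht =>
    (add_eq_zero_iff_of_nonneg defectMass_nonneg domainExcess_nonneg).1 (hzero t ht)
  refine ⟨fun t ht => domainExcess_eq_zero.1 (hvanish t ht).2, fun t ht => ?_⟩
  obtain ⟨hg, hh⟩ := domainExcess_eq_zero.1 (hvanish t ht).2
  exact le_of_integral_defect_eq_zero hg hh (hWl t ht) (hU.continuous.uncurry_left t)
    (hL.continuous.uncurry_left t) (hU.nonneg t) (hL.eq_zero t) (hvanish t ht).1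

theorem comparison_two_free_boundaries_general
    (T : ℝ) (hT : 0 < T) (J₁ : ℝ → ℝ) (hJ : IsKernel J₁)
    (d₁ μ : ℝ) (hd₁ : 0 < d₁) (hμ : 0 < μ)
    (m : ℝ → ℝ → ℝ)
    (hm_bdd : ∃ C, ∀ t x, |m t x| ≤ C)
    (gb hb gl hl gb' hb' gl' hl' : ℝ → ℝ) (ub ul : ℝ → ℝ → ℝ)
    -- boundary curves: C¹, ordered, monotone
    (hgbhb : ∀ t ∈ Set.Icc 0 T, gb t < hb t)
    (hglhl : ∀ t ∈ Set.Icc 0 T, gl t < hl t)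
    (hgbD : ∀ t ∈ Set.Icc 0 T, HasDerivAt gb (gb' t) t)
    (hhbD : ∀ t ∈ Set.Icc 0 T, HasDerivAt hb (hb' t) t)
    (hglD : ∀ t ∈ Set.Icc 0 T, HasDerivAt gl (gl' t) t)
    (hhlD : ∀ t ∈ Set.Icc 0 T, HasDerivAt hl (hl' t) t)
    (hgb' : ∀ t ∈ Set.Icc 0 T, gb' t ≤ 0) (hhb' : ∀ t ∈ Set.Icc 0 T, 0 ≤ hb' t)
    (hgl' : ∀ t ∈ Set.Icc 0 T, gl' t ≤ 0) (hhl' : ∀ t ∈ Set.Icc 0 T, 0 ≤ hl' t)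
    -- ū, u̲: nonnegative, bounded, continuous
    (hub_nonneg : ∀ t ∈ Set.Icc 0 T, ∀ x : ℝ, 0 ≤ ub t x)
    (hul_nonneg : ∀ t ∈ Set.Icc 0 T, ∀ x : ℝ, 0 ≤ ul t x)
    (hul_bdd : ∃ C, ∀ t x, ul t x ≤ C)
    (hub_cont : ContinuousOn (fun p : ℝ × ℝ => ub p.1 p.2) (Set.Icc 0 T ×ˢ Set.univ))
    (hul_cont : ContinuousOn (fun p : ℝ × ℝ => ul p.1 p.2) (Set.Icc 0 T ×ˢ Set.univ))
    -- (i) (ū, ḡ, h̄) is an upper solution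
    (hub_eq : ∀ t ∈ Set.Ioc 0 T, ∀ x ∈ Set.Ioo (gb t) (hb t),
      ∃ D, HasDerivAt (fun s => ub s x) D t ∧
        d₁ * (∫ y in gb t..hb t, J₁ (x - y) * ub t y) - d₁ * ub t x
          + ub t x * (m t x - ub t x) ≤ D)
    (hhb_ineq : ∀ t ∈ Set.Ioc 0 T,
      μ * (∫ x in gb t..hb t, (∫ y in Set.Ioi (hb t), J₁ (x - y)) * ub t x) ≤ hb' t)
    (hgb_ineq : ∀ t ∈ Set.Ioc 0 T,
      gb' t ≤ -(μ * ∫ x in gb t..hb t, (∫ y in Set.Iio (gb t), J₁ (x - y)) * ub t x))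
    -- (ii) (u̲, g̲, h̲) is a lower solution
    (hul_eq : ∀ t ∈ Set.Ioc 0 T, ∀ x ∈ Set.Ioo (gl t) (hl t),
      ∃ D, HasDerivAt (fun s => ul s x) D t ∧
        D ≤ d₁ * (∫ y in gl t..hl t, J₁ (x - y) * ul t y) - d₁ * ul t x
          + ul t x * (m t x - ul t x))
    (hul_out : ∀ t ∈ Set.Icc 0 T, ∀ x : ℝ, x ∉ Set.Ioo (gl t) (hl t) → ul t x = 0)
    (hhl_ineq : ∀ t ∈ Set.Ioc 0 T,
      hl' t ≤ μ * ∫ x in gl t..hl t, (∫ y in Set.Ioi (hl t), J₁ (x - y)) * ul t x)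
    (hgl_ineq : ∀ t ∈ Set.Ioc 0 T,
      -(μ * ∫ x in gl t..hl t, (∫ y in Set.Iio (gl t), J₁ (x - y)) * ul t x) ≤ gl' t)
    -- (iii) ordering at t = 0
    (hinit_g : gb 0 ≤ gl 0) (hinit_h : hl 0 ≤ hb 0)
    (hinit_u : ∀ x ∈ Set.Icc (gl 0) (hl 0), ul 0 x ≤ ub 0 x) :
    (∀ t ∈ Set.Icc 0 T, gb t ≤ gl t ∧ hl t ≤ hb t) ∧
    (∀ t ∈ Set.Icc 0 T, ∀ x ∈ Set.Icc (gl t) (hl t), ul t x ≤ ub t x) := by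
  obtain ⟨K, hK⟩ := hm_bdd
  obtain ⟨M, hM⟩ := hul_bdd
  have hU := isUpperSolution_freezeTime hT.le
    (isExpandingDomain_freezeTime hT.le hgbhb hgbD hhbD hgb' hhb') hub_cont hub_nonneg hub_eq
    hhb_ineq hgb_ineq
  have hL := isLowerSolution_freezeTime hT.le
    (isExpandingDomain_freezeTime hT.le hglhl hglD hhlD hgl' hhl') hul_cont hul_nonneg hul_out
    hul_eq hhl_ineq hgl_ineq
  have h0 : freezeTime T 0 = 0 := freezeTime_of_mem (left_mem_Icc.2 hT.le)
  obtain ⟨hdomain, hsolution⟩ := comparison_principle hJ hd₁.le hμ.le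
    ((abs_nonneg _).trans (hK 0 0)) (fun t x => (le_abs_self _).trans (hK t x))
    (fun t x => hM _ x) hU hL (by simpa [h0] using hinit_g) (by simpa [h0] using hinit_h)
    (by simpa [h0] using hinit_u)
  exact ⟨fun t ht => by simpa [freezeTime_of_mem ht] using hdomain t ht,
    fun t ht => by simpa [freezeTime_of_mem ht] using hsolution t ht⟩

/-- Lemma 5.1 (i): comparison principle with two free boundaries.
An upper solution `(ū, ḡ, h̄)` and a lower solution `(u̲, g̲, h̲)` of the one-species
free boundary problem with reaction `F(t,x,s) = s(m(t,x) - s)`, ordered at `t = 0`,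
stay ordered on `[0, T]`. Here `gb'`, `hb'`, `gl'`, `hl'` are the derivatives of the
boundary curves. -/
theorem comparison_two_free_boundaries
    (T : ℝ) (hT : 0 < T) (J₁ : ℝ → ℝ) (hJ : IsKernel J₁)
    (d₁ μ : ℝ) (hd₁ : 0 < d₁) (hμ : 0 < μ)
    (m : ℝ → ℝ → ℝ) (hm_cont : Continuous fun p : ℝ × ℝ => m p.1 p.2)
    (hm_bdd : ∃ C, ∀ t x, |m t x| ≤ C)
    (gb hb gl hl gb' hb' gl' hl' : ℝ → ℝ) (ub ul : ℝ → ℝ → ℝ)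
    -- boundary curves: C¹, ordered, monotone
    (hgbhb : ∀ t ∈ Set.Icc 0 T, gb t < hb t)
    (hglhl : ∀ t ∈ Set.Icc 0 T, gl t < hl t)
    (hgbD : ∀ t ∈ Set.Icc 0 T, HasDerivAt gb (gb' t) t)
    (hhbD : ∀ t ∈ Set.Icc 0 T, HasDerivAt hb (hb' t) t)
    (hglD : ∀ t ∈ Set.Icc 0 T, HasDerivAt gl (gl' t) t)
    (hhlD : ∀ t ∈ Set.Icc 0 T, HasDerivAt hl (hl' t) t)
    (hgb' : ∀ t ∈ Set.Icc 0 T, gb' t ≤ 0) (hhb' : ∀ t ∈ Set.Icc 0 T, 0 ≤ hb' t)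
    (hgl' : ∀ t ∈ Set.Icc 0 T, gl' t ≤ 0) (hhl' : ∀ t ∈ Set.Icc 0 T, 0 ≤ hl' t)
    -- ū, u̲: nonnegative, bounded, continuous
    (hub_nonneg : ∀ t ∈ Set.Icc 0 T, ∀ x : ℝ, 0 ≤ ub t x)
    (hul_nonneg : ∀ t ∈ Set.Icc 0 T, ∀ x : ℝ, 0 ≤ ul t x)
    (hub_bdd : ∃ C, ∀ t x, ub t x ≤ C) (hul_bdd : ∃ C, ∀ t x, ul t x ≤ C)
    (hub_cont : ContinuousOn (fun p : ℝ × ℝ => ub p.1 p.2) (Set.Icc 0 T ×ˢ Set.univ))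
    (hul_cont : ContinuousOn (fun p : ℝ × ℝ => ul p.1 p.2) (Set.Icc 0 T ×ˢ Set.univ))
    -- (i) (ū, ḡ, h̄) is an upper solution
    (hub_eq : ∀ t ∈ Set.Ioc 0 T, ∀ x ∈ Set.Ioo (gb t) (hb t),
      ∃ D, HasDerivAt (fun s => ub s x) D t ∧
        d₁ * (∫ y in gb t..hb t, J₁ (x - y) * ub t y) - d₁ * ub t x
          + ub t x * (m t x - ub t x) ≤ D)
    (hub_out : ∀ t ∈ Set.Icc 0 T, ∀ x : ℝ, x ∉ Set.Ioo (gb t) (hb t) → 0 ≤ ub t x)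
    (hhb_ineq : ∀ t ∈ Set.Ioc 0 T,
      μ * (∫ x in gb t..hb t, (∫ y in Set.Ioi (hb t), J₁ (x - y)) * ub t x) ≤ hb' t)
    (hgb_ineq : ∀ t ∈ Set.Ioc 0 T,
      gb' t ≤ -(μ * ∫ x in gb t..hb t, (∫ y in Set.Iio (gb t), J₁ (x - y)) * ub t x))
    -- (ii) (u̲, g̲, h̲) is a lower solution
    (hul_eq : ∀ t ∈ Set.Ioc 0 T, ∀ x ∈ Set.Ioo (gl t) (hl t),
      ∃ D, HasDerivAt (fun s => ul s x) D t ∧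
        D ≤ d₁ * (∫ y in gl t..hl t, J₁ (x - y) * ul t y) - d₁ * ul t x
          + ul t x * (m t x - ul t x))
    (hul_out : ∀ t ∈ Set.Icc 0 T, ∀ x : ℝ, x ∉ Set.Ioo (gl t) (hl t) → ul t x = 0)
    (hhl_ineq : ∀ t ∈ Set.Ioc 0 T,
      hl' t ≤ μ * ∫ x in gl t..hl t, (∫ y in Set.Ioi (hl t), J₁ (x - y)) * ul t x)
    (hgl_ineq : ∀ t ∈ Set.Ioc 0 T,
      -(μ * ∫ x in gl t..hl t, (∫ y in Set.Iio (gl t), J₁ (x - y)) * ul t x) ≤ gl' t)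
    -- (iii) ordering at t = 0
    (hinit_g : gb 0 ≤ gl 0) (hinit_h : hl 0 ≤ hb 0)
    (hinit_u : ∀ x ∈ Set.Icc (gl 0) (hl 0), ul 0 x ≤ ub 0 x) :
    (∀ t ∈ Set.Icc 0 T, gb t ≤ gl t ∧ hl t ≤ hb t) ∧
    (∀ t ∈ Set.Icc 0 T, ∀ x ∈ Set.Icc (gl t) (hl t), ul t x ≤ ub t x) :=
  comparison_two_free_boundaries_general T hT J₁ hJ d₁ μ hd₁ hμ m hm_bdd gb hb gl hl gb' hb' gl' hl'
    ub ul hgbhb hglhl hgbD hhbD hglD hhlD hgb' hhb' hgl' hhl' hub_nonneg hul_nonneg hul_bdd hub_cont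
    hul_cont hub_eq hhb_ineq hgb_ineq hul_eq hul_out hhl_ineq hgl_ineq hinit_g hinit_h hinit_u
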